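/- (Theorem 2) Let A be a nonzero n×n real matrix admitting an exponential decay bound: there exist M > 0 and α > 0 such that ‖exp(tA)‖₂ ≤ M·exp(−α t) for all t ≥ 0. Let B be an n×m real matrix for which there exists σ > 0 such that ‖Bᵀ·v‖₂ ≥ σ·‖v‖₂ for all v ∈ ℝⁿ, and let P_R = ∫₀^∞ exp(tA)·B·Bᵀ·exp(tAᵀ) dt be the controllability Gramian. Let C_p be a p×n real matrix, and let E_R be a q×k real matrix and C_r a q×(n−k) real matrix, not both zero, with C_{r,R} = [E_R, C_r] the q×n horizontal concatenation (so ‖C_{r,R}‖_F² = ‖E_R‖_F² + ‖C_r‖_F²). Then tr(C_p·P_R·C_pᵀ) / tr(C_{r,R}·P_R·C_{r,R}ᵀ) ≤ 8·(M²·‖A‖₂·‖B‖₂²/(σ²·α)) · ‖C_p‖_F² / (‖E_R‖_F² + ‖C_r‖_F²), and in particular tr(C_{r,R}·P_R·C_{r,R}ᵀ) > 0 so the ratio is well defined. -/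

import Mathlib

/-!
With `cᵢ` the rows of `C`, `tr(C P_R Cᵀ) = ∫₀^∞ ∑ᵢ ‖Bᵀ exp(tAᵀ) cᵢ‖² dt`. The decay bound gives
`‖Bᵀ exp(tAᵀ) c‖ ≤ ‖B‖ M e^{-αt} ‖c‖`, while the lower bound on `Bᵀ` together with
`‖exp(-tAᵀ)‖ ≤ e^{t‖A‖}` gives `‖Bᵀ exp(tAᵀ) c‖ ≥ σ e^{-t‖A‖} ‖c‖`. Integrating,
`σ²/(2‖A‖) ‖C‖_F² ≤ tr(C P_R Cᵀ) ≤ M²‖B‖²/(2α) ‖C‖_F²`, and the ratio bound follows by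
applying the upper estimate to `C_p` and the lower one to `C_{r,R}`.
-/

open Matrix MeasureTheory
open scoped Matrix.Norms.L2Operator

/-- The Euclidean norm of a real vector. -/
noncomputable def euclNorm {ι : Type*} [Fintype ι] (x : ι → ℝ) : ℝ :=
  Real.sqrt (∑ i, x i ^ 2)

section EuclNorm

variable {m n : Type*} [Fintype m] [Fintype n]

lemma euclNorm_eq_norm (x : n → ℝ) : euclNorm x = ‖(EuclideanSpace.equiv n ℝ).symm x‖ := by
  simp [EuclideanSpace.norm_eq, euclNorm, sq_abs]

lemma euclNorm_nonneg (x : n → ℝ) : 0 ≤ euclNorm x := Real.sqrt_nonneg _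

lemma euclNorm_sq (x : n → ℝ) : euclNorm x ^ 2 = ∑ i, x i ^ 2 :=
  Real.sq_sqrt (by positivity)

lemma euclNorm_mulVec_le [DecidableEq n] (A : Matrix m n ℝ) (v : n → ℝ) :
    euclNorm (A *ᵥ v) ≤ ‖A‖ * euclNorm v := by
  rw [euclNorm_eq_norm, euclNorm_eq_norm]
  exact A.l2_opNorm_mulVec ((EuclideanSpace.equiv n ℝ).symm v)

end EuclNorm

lemma NormedSpace.norm_exp_le_exp_norm {𝔸 : Type*} [NormedRing 𝔸] [NormedAlgebra ℝ 𝔸]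
    [CompleteSpace 𝔸] [NormOneClass 𝔸] (x : 𝔸) : ‖exp x‖ ≤ Real.exp ‖x‖ := by
  rw [exp_eq_tsum ℝ, Real.exp_eq_exp_ℝ]
  refine tsum_of_norm_bounded (expSeries_div_hasSum_exp ‖x‖) fun k => ?_
  rw [norm_smul, norm_inv, Real.norm_natCast, inv_mul_eq_div]
  gcongr
  exact norm_pow_le x k

namespace Matrix

variable {m n q : Type*} [Fintype m] [Fintype n] [Fintype q]

lemma trace_mul_mul_transpose (C : Matrix q n ℝ) (X : Matrix n n ℝ) :
    (C * X * Cᵀ).trace = ∑ i, C i ⬝ᵥ (X *ᵥ C i) := by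
  simp only [trace, diag, mul_apply, mulVec, dotProduct, transpose_apply, Finset.mul_sum,
    Finset.sum_mul, mul_assoc]
  exact Finset.sum_congr rfl fun _ _ => Finset.sum_comm

lemma trace_transpose_mul_self (C : Matrix q n ℝ) : (Cᵀ * C).trace = ∑ i, euclNorm (C i) ^ 2 := by
  simp only [euclNorm_sq, trace, diag, mul_apply, transpose_apply, ← sq]
  exact Finset.sum_comm

lemma trace_transpose_mul_self_nonneg (C : Matrix q n ℝ) : 0 ≤ (Cᵀ * C).trace := by
  rw [trace_transpose_mul_self]; positivity

lemma trace_transpose_mul_self_pos {C : Matrix q n ℝ} (hC : C ≠ 0) : 0 < (Cᵀ * C).trace := by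
  refine (trace_transpose_mul_self_nonneg C).lt_of_ne' ?_
  simpa using trace_conjTranspose_mul_self_eq_zero_iff.not.mpr hC

lemma trace_transpose_mul_self_fromCols {k l : Type*} [Fintype k] [Fintype l]
    (E : Matrix q k ℝ) (F : Matrix q l ℝ) :
    ((fromCols E F)ᵀ * fromCols E F).trace = (Eᵀ * E).trace + (Fᵀ * F).trace := by
  simp only [trace_transpose_mul_self, euclNorm_sq, Fintype.sum_sum_type, fromCols_apply_inl,
    fromCols_apply_inr, Finset.sum_add_distrib]

noncomputable def traceConjCLM (C : Matrix q n ℝ) : Matrix n n ℝ →L[ℝ] ℝ :=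
  LinearMap.toContinuousLinearMap
    { toFun := fun X => (C * X * Cᵀ).trace
      map_add' := fun X Y => by simp [Matrix.mul_add, Matrix.add_mul]
      map_smul' := fun r X => by simp }

@[simp]
lemma traceConjCLM_apply (C : Matrix q n ℝ) (X : Matrix n n ℝ) :
    traceConjCLM C X = (C * X * Cᵀ).trace :=
  rfl

variable [DecidableEq n]

lemma l2_opNorm_transpose [DecidableEq m] (A : Matrix m n ℝ) : ‖Aᵀ‖ = ‖A‖ :=
  l2_opNorm_conjTranspose A

lemma exp_smul_transpose (A : Matrix n n ℝ) (t : ℝ) :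
    NormedSpace.exp (t • Aᵀ) = (NormedSpace.exp (t • A))ᵀ := by
  rw [← transpose_smul, exp_transpose]

lemma exp_neg_norm_mul_euclNorm_le [Nonempty n] (X : Matrix n n ℝ) (v : n → ℝ) :
    Real.exp (-‖X‖) * euclNorm v ≤ euclNorm (NormedSpace.exp X *ᵥ v) := by
  have hinv : NormedSpace.exp (-X) * NormedSpace.exp X = 1 := by
    rw [← exp_add_of_commute _ _ (Commute.refl X).neg_left, neg_add_cancel, NormedSpace.exp_zero]
  have key : euclNorm v ≤ Real.exp ‖X‖ * euclNorm (NormedSpace.exp X *ᵥ v) :=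
    calc euclNorm v = euclNorm (NormedSpace.exp (-X) *ᵥ (NormedSpace.exp X *ᵥ v)) := by
          rw [mulVec_mulVec, hinv, one_mulVec]
      _ ≤ ‖NormedSpace.exp (-X)‖ * euclNorm (NormedSpace.exp X *ᵥ v) := euclNorm_mulVec_le _ _
      _ ≤ Real.exp ‖X‖ * euclNorm (NormedSpace.exp X *ᵥ v) := by
          gcongr
          · exact euclNorm_nonneg _
          · simpa using NormedSpace.norm_exp_le_exp_norm (-X)
  rwa [Real.exp_neg, inv_mul_le_iff₀ (Real.exp_pos _)]

end Matrix

lemma integral_exp_neg_mul_Ioi_zero {k : ℝ} (hk : 0 < k) :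
    ∫ t in Set.Ioi 0, Real.exp (-k * t) = k⁻¹ := by
  rw [integral_exp_mul_Ioi (neg_neg_of_pos hk) 0]
  simp

lemma exp_neg_two_mul_mul_eq_sq (c t : ℝ) : Real.exp (-(2 * c) * t) = Real.exp (-c * t) ^ 2 := by
  rw [← Real.exp_nat_mul]; ring_nf

section Gramian

variable {n m q : Type*} [Fintype n] [DecidableEq n] [Fintype m] [Fintype q]

noncomputable def gramianIntegrand (A : Matrix n n ℝ) (B : Matrix n m ℝ) (t : ℝ) : Matrix n n ℝ :=
  NormedSpace.exp (t • A) * (B * Bᵀ) * NormedSpace.exp (t • Aᵀ)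

noncomputable def controllabilityGramian (A : Matrix n n ℝ) (B : Matrix n m ℝ) : Matrix n n ℝ :=
  ∫ t in Set.Ioi 0, gramianIntegrand A B t

lemma continuous_gramianIntegrand (A : Matrix n n ℝ) (B : Matrix n m ℝ) :
    Continuous (gramianIntegrand A B) := by
  have hexp (X : Matrix n n ℝ) : Continuous fun t : ℝ => NormedSpace.exp (t • X) :=
    continuous_iff_continuousAt.mpr fun t => (hasDerivAt_exp_smul_const X t).continuousAt
  exact ((hexp A).mul continuous_const).mul (hexp Aᵀ)

lemma trace_mul_gramianIntegrand_mul_transpose (A : Matrix n n ℝ) (B : Matrix n m ℝ)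
    (C : Matrix q n ℝ) (t : ℝ) :
    (C * gramianIntegrand A B t * Cᵀ).trace =
      ∑ i, euclNorm (Bᵀ *ᵥ (NormedSpace.exp (t • Aᵀ) *ᵥ C i)) ^ 2 := by
  have hfactor : gramianIntegrand A B t = (Bᵀ * NormedSpace.exp (t • Aᵀ))ᵀ *
      (Bᵀ * NormedSpace.exp (t • Aᵀ)) := by
    rw [gramianIntegrand, exp_smul_transpose, transpose_mul, transpose_transpose,
      transpose_transpose]
    simp only [Matrix.mul_assoc]
  rw [trace_mul_mul_transpose]
  refine Finset.sum_congr rfl fun i _ => ?_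
  rw [hfactor, ← mulVec_mulVec, dotProduct_mulVec, vecMul_transpose, euclNorm_sq, mulVec_mulVec]
  simp only [dotProduct, sq]

lemma le_trace_mul_gramianIntegrand_mul_transpose [Nonempty n] (A : Matrix n n ℝ)
    {B : Matrix n m ℝ} {σ : ℝ} (hσ : 0 ≤ σ)
    (hB : ∀ v : n → ℝ, σ * euclNorm v ≤ euclNorm (Bᵀ *ᵥ v)) (C : Matrix q n ℝ) {t : ℝ}
    (ht : 0 ≤ t) :
    σ ^ 2 * (Cᵀ * C).trace * Real.exp (-(2 * ‖A‖) * t) ≤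
      (C * gramianIntegrand A B t * Cᵀ).trace := by
  rw [trace_mul_gramianIntegrand_mul_transpose, trace_transpose_mul_self, Finset.mul_sum,
    Finset.sum_mul]
  refine Finset.sum_le_sum fun i _ => ?_
  have hnorm : ‖t • Aᵀ‖ = ‖A‖ * t := by
    rw [norm_smul, Real.norm_of_nonneg ht, l2_opNorm_transpose, mul_comm]
  have hvec : σ * (Real.exp (-‖A‖ * t) * euclNorm (C i)) ≤
      euclNorm (Bᵀ *ᵥ (NormedSpace.exp (t • Aᵀ) *ᵥ C i)) := by
    refine le_trans ?_ (hB _)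
    gcongr
    simpa [hnorm] using exp_neg_norm_mul_euclNorm_le (t • Aᵀ) (C i)
  calc _ = (σ * (Real.exp (-‖A‖ * t) * euclNorm (C i))) ^ 2 := by
        rw [exp_neg_two_mul_mul_eq_sq]; ring
    _ ≤ _ := by
        gcongr
        exact mul_nonneg hσ (mul_nonneg (Real.exp_pos _).le (euclNorm_nonneg _))

variable [DecidableEq m] {A : Matrix n n ℝ} {M α : ℝ}

lemma norm_gramianIntegrand_le
    (hdecay : ∀ t : ℝ, 0 ≤ t → ‖NormedSpace.exp (t • A)‖ ≤ M * Real.exp (-α * t))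
    (B : Matrix n m ℝ) {t : ℝ} (ht : 0 ≤ t) :
    ‖gramianIntegrand A B t‖ ≤ M ^ 2 * ‖B‖ ^ 2 * Real.exp (-(2 * α) * t) := by
  have hBBt : ‖B * Bᵀ‖ ≤ ‖B‖ ^ 2 := by
    simpa only [l2_opNorm_transpose, sq] using l2_opNorm_mul B Bᵀ
  have hexpT : ‖NormedSpace.exp (t • Aᵀ)‖ = ‖NormedSpace.exp (t • A)‖ := by
    rw [exp_smul_transpose, l2_opNorm_transpose]
  have hbound_nonneg : 0 ≤ M * Real.exp (-α * t) := (norm_nonneg _).trans (hdecay t ht)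
  calc ‖gramianIntegrand A B t‖
      ≤ ‖NormedSpace.exp (t • A)‖ * ‖B * Bᵀ‖ * ‖NormedSpace.exp (t • Aᵀ)‖ :=
        (l2_opNorm_mul _ _).trans (by gcongr; exact l2_opNorm_mul _ _)
    _ ≤ M * Real.exp (-α * t) * ‖B‖ ^ 2 * (M * Real.exp (-α * t)) := by
        rw [hexpT]; gcongr <;> exact hdecay t ht
    _ = M ^ 2 * ‖B‖ ^ 2 * Real.exp (-(2 * α) * t) := by
        rw [exp_neg_two_mul_mul_eq_sq]; ring

lemma integrableOn_gramianIntegrand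
    (hdecay : ∀ t : ℝ, 0 ≤ t → ‖NormedSpace.exp (t • A)‖ ≤ M * Real.exp (-α * t))
    (hα : 0 < α) (B : Matrix n m ℝ) :
    IntegrableOn (gramianIntegrand A B) (Set.Ioi 0) := by
  refine Integrable.mono' ((exp_neg_integrableOn_Ioi 0 (by positivity : 0 < 2 * α)).const_mul
    (M ^ 2 * ‖B‖ ^ 2)) (continuous_gramianIntegrand A B).aestronglyMeasurable ?_
  filter_upwards [self_mem_ae_restrict measurableSet_Ioi] with t ht
  exact norm_gramianIntegrand_le hdecay B (le_of_lt ht)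

lemma trace_mul_gramianIntegrand_mul_transpose_le
    (hdecay : ∀ t : ℝ, 0 ≤ t → ‖NormedSpace.exp (t • A)‖ ≤ M * Real.exp (-α * t))
    (B : Matrix n m ℝ) (C : Matrix q n ℝ) {t : ℝ} (ht : 0 ≤ t) :
    (C * gramianIntegrand A B t * Cᵀ).trace ≤
      M ^ 2 * ‖B‖ ^ 2 * (Cᵀ * C).trace * Real.exp (-(2 * α) * t) := by
  rw [trace_mul_gramianIntegrand_mul_transpose, trace_transpose_mul_self, Finset.mul_sum,
    Finset.sum_mul]
  refine Finset.sum_le_sum fun i _ => ?_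
  have hbound_nonneg : 0 ≤ M * Real.exp (-α * t) := (norm_nonneg _).trans (hdecay t ht)
  have hvec : euclNorm (Bᵀ *ᵥ (NormedSpace.exp (t • Aᵀ) *ᵥ C i)) ≤
      ‖B‖ * (M * Real.exp (-α * t)) * euclNorm (C i) :=
    calc _ ≤ ‖Bᵀ‖ * (‖NormedSpace.exp (t • Aᵀ)‖ * euclNorm (C i)) :=
          (euclNorm_mulVec_le _ _).trans (by gcongr; exact euclNorm_mulVec_le _ _)
      _ ≤ ‖B‖ * (M * Real.exp (-α * t) * euclNorm (C i)) := by
          rw [l2_opNorm_transpose, exp_smul_transpose, l2_opNorm_transpose]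
          gcongr
          · exact euclNorm_nonneg _
          · exact hdecay t ht
      _ = _ := by ring
  calc _ ≤ (‖B‖ * (M * Real.exp (-α * t)) * euclNorm (C i)) ^ 2 := by
        gcongr; exact euclNorm_nonneg _
    _ = _ := by rw [exp_neg_two_mul_mul_eq_sq]; ring

lemma trace_mul_controllabilityGramian_mul_transpose_le
    (hdecay : ∀ t : ℝ, 0 ≤ t → ‖NormedSpace.exp (t • A)‖ ≤ M * Real.exp (-α * t))
    (hα : 0 < α) (B : Matrix n m ℝ) (C : Matrix q n ℝ) :
    (C * controllabilityGramian A B * Cᵀ).trace ≤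
      M ^ 2 * ‖B‖ ^ 2 / (2 * α) * (Cᵀ * C).trace := by
  have hint := integrableOn_gramianIntegrand hdecay hα B
  rw [controllabilityGramian, ← traceConjCLM_apply, ← (traceConjCLM C).integral_comp_comm hint]
  calc ∫ t in Set.Ioi 0, traceConjCLM C (gramianIntegrand A B t)
      ≤ ∫ t in Set.Ioi 0, M ^ 2 * ‖B‖ ^ 2 * (Cᵀ * C).trace * Real.exp (-(2 * α) * t) :=
        setIntegral_mono_on ((traceConjCLM C).integrable_comp hint)
          ((exp_neg_integrableOn_Ioi 0 (by positivity)).const_mul _) measurableSet_Ioi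
          fun t ht => trace_mul_gramianIntegrand_mul_transpose_le hdecay B C (le_of_lt ht)
    _ = M ^ 2 * ‖B‖ ^ 2 / (2 * α) * (Cᵀ * C).trace := by
        rw [integral_const_mul, integral_exp_neg_mul_Ioi_zero (by positivity)]
        ring

lemma le_trace_mul_controllabilityGramian_mul_transpose (hA : A ≠ 0)
    (hdecay : ∀ t : ℝ, 0 ≤ t → ‖NormedSpace.exp (t • A)‖ ≤ M * Real.exp (-α * t))
    (hα : 0 < α) {B : Matrix n m ℝ} {σ : ℝ} (hσ : 0 ≤ σ)
    (hB : ∀ v : n → ℝ, σ * euclNorm v ≤ euclNorm (Bᵀ *ᵥ v)) (C : Matrix q n ℝ) :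
    σ ^ 2 / (2 * ‖A‖) * (Cᵀ * C).trace ≤ (C * controllabilityGramian A B * Cᵀ).trace := by
  have : Nonempty n := by
    obtain ⟨i, -, -⟩ : ∃ i j, A i j ≠ 0 := by simpa [← Matrix.ext_iff] using hA
    exact ⟨i⟩
  have hAn : 0 < ‖A‖ := norm_pos_iff.mpr hA
  have hint := integrableOn_gramianIntegrand hdecay hα B
  rw [controllabilityGramian, ← traceConjCLM_apply, ← (traceConjCLM C).integral_comp_comm hint]
  calc σ ^ 2 / (2 * ‖A‖) * (Cᵀ * C).trace
      = ∫ t in Set.Ioi 0, σ ^ 2 * (Cᵀ * C).trace * Real.exp (-(2 * ‖A‖) * t) := by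
        rw [integral_const_mul, integral_exp_neg_mul_Ioi_zero (by positivity)]
        ring
    _ ≤ ∫ t in Set.Ioi 0, traceConjCLM C (gramianIntegrand A B t) :=
        setIntegral_mono_on ((exp_neg_integrableOn_Ioi 0 (by positivity)).const_mul _)
          ((traceConjCLM C).integrable_comp hint) measurableSet_Ioi
          fun t ht => le_trace_mul_gramianIntegrand_mul_transpose A hσ hB C (le_of_lt ht)

end Gramian

theorem stmt_16_general {k l m p q : ℕ}
    (A : Matrix (Fin k ⊕ Fin l) (Fin k ⊕ Fin l) ℝ) (hA : A ≠ 0)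
    (B : Matrix (Fin k ⊕ Fin l) (Fin m) ℝ)
    (M α : ℝ) (hα : 0 < α)
    (hdecay : ∀ t : ℝ, 0 ≤ t →
      ‖NormedSpace.exp (t • A)‖ ≤ M * Real.exp (-α * t))
    (σ : ℝ) (hσ : 0 < σ)
    (hB : ∀ v : Fin k ⊕ Fin l → ℝ, σ * euclNorm v ≤ euclNorm (Bᵀ *ᵥ v))
    (C_p : Matrix (Fin p) (Fin k ⊕ Fin l) ℝ)
    (E_R : Matrix (Fin q) (Fin k) ℝ) (C_r : Matrix (Fin q) (Fin l) ℝ)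
    (hnz : ¬(E_R = 0 ∧ C_r = 0)) :
    0 < (fromCols E_R C_r *
          (∫ t in Set.Ioi (0 : ℝ),
            NormedSpace.exp (t • A) * (B * Bᵀ) * NormedSpace.exp (t • Aᵀ)) *
          (fromCols E_R C_r)ᵀ).trace ∧
      (C_p * (∫ t in Set.Ioi (0 : ℝ),
            NormedSpace.exp (t • A) * (B * Bᵀ) * NormedSpace.exp (t • Aᵀ)) *
          C_pᵀ).trace /
        (fromCols E_R C_r *
          (∫ t in Set.Ioi (0 : ℝ),
            NormedSpace.exp (t • A) * (B * Bᵀ) * NormedSpace.exp (t • Aᵀ)) *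
          (fromCols E_R C_r)ᵀ).trace ≤
      8 * (M ^ 2 * ‖A‖ * ‖B‖ ^ 2 / (σ ^ 2 * α)) *
        (C_pᵀ * C_p).trace / ((E_Rᵀ * E_R).trace + (C_rᵀ * C_r).trace) := by
  set C_rR := fromCols E_R C_r
  have hC_rR : C_rR ≠ 0 := by rwa [Ne, ← fromCols_zero, fromCols_ext_iff]
  have hAn : 0 < ‖A‖ := norm_pos_iff.mpr hA
  have hSp := trace_transpose_mul_self_nonneg C_p
  have hSr := trace_transpose_mul_self_pos hC_rR
  have hTr := le_trace_mul_controllabilityGramian_mul_transpose hA hdecay hα hσ.le hB C_rR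
  have hTp := trace_mul_controllabilityGramian_mul_transpose_le hdecay hα B C_p
  have hTr_pos : 0 < (C_rR * controllabilityGramian A B * C_rRᵀ).trace :=
    lt_of_lt_of_le (by positivity) hTr
  refine ⟨hTr_pos, ?_⟩
  rw [← trace_transpose_mul_self_fromCols]
  calc (C_p * controllabilityGramian A B * C_pᵀ).trace /
        (C_rR * controllabilityGramian A B * C_rRᵀ).trace
      ≤ M ^ 2 * ‖B‖ ^ 2 / (2 * α) * (C_pᵀ * C_p).trace /
          (σ ^ 2 / (2 * ‖A‖) * (C_rRᵀ * C_rR).trace) :=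
        div_le_div₀ (by positivity) hTp (by positivity) hTr
    _ = M ^ 2 * ‖A‖ * ‖B‖ ^ 2 / (σ ^ 2 * α) * (C_pᵀ * C_p).trace / (C_rRᵀ * C_rR).trace := by
        field_simp
    _ ≤ 8 * (M ^ 2 * ‖A‖ * ‖B‖ ^ 2 / (σ ^ 2 * α)) * (C_pᵀ * C_p).trace /
          (C_rRᵀ * C_rR).trace := by
        gcongr
        exact le_mul_of_one_le_left (by positivity) (by norm_num)

/-- **Theorem 2.** Let `A ≠ 0` admit the exponential decay bound
`‖exp(tA)‖₂ ≤ M·exp(−αt)` for all `t ≥ 0`, let `B` satisfy `‖Bᵀ·v‖₂ ≥ σ·‖v‖₂` for all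
`v` and some `σ > 0`, and let `P_R = ∫₀^∞ exp(tA)·B·Bᵀ·exp(tAᵀ) dt` be the
controllability Gramian.  For any `C_p` and `C_{r,R} = [E_R, C_r]` (horizontal
concatenation, `E_R`, `C_r` not both zero),
`tr(C_p·P_R·C_pᵀ)/tr(C_{r,R}·P_R·C_{r,R}ᵀ)
  ≤ 8·(M²·‖A‖₂·‖B‖₂²/(σ²·α))·‖C_p‖_F²/(‖E_R‖_F² + ‖C_r‖_F²)`,
and in particular `tr(C_{r,R}·P_R·C_{r,R}ᵀ) > 0`.  Here `‖M‖_F² = tr(Mᵀ·M)`. -/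
theorem stmt_16 {k l m p q : ℕ}
    (A : Matrix (Fin k ⊕ Fin l) (Fin k ⊕ Fin l) ℝ) (hA : A ≠ 0)
    (B : Matrix (Fin k ⊕ Fin l) (Fin m) ℝ)
    (M α : ℝ) (hM : 0 < M) (hα : 0 < α)
    (hdecay : ∀ t : ℝ, 0 ≤ t →
      ‖NormedSpace.exp (t • A)‖ ≤ M * Real.exp (-α * t))
    (σ : ℝ) (hσ : 0 < σ)
    (hB : ∀ v : Fin k ⊕ Fin l → ℝ, σ * euclNorm v ≤ euclNorm (Bᵀ *ᵥ v))
    (C_p : Matrix (Fin p) (Fin k ⊕ Fin l) ℝ)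
    (E_R : Matrix (Fin q) (Fin k) ℝ) (C_r : Matrix (Fin q) (Fin l) ℝ)
    (hnz : ¬(E_R = 0 ∧ C_r = 0)) :
    0 < (fromCols E_R C_r *
          (∫ t in Set.Ioi (0 : ℝ),
            NormedSpace.exp (t • A) * (B * Bᵀ) * NormedSpace.exp (t • Aᵀ)) *
          (fromCols E_R C_r)ᵀ).trace ∧
      (C_p * (∫ t in Set.Ioi (0 : ℝ),
            NormedSpace.exp (t • A) * (B * Bᵀ) * NormedSpace.exp (t • Aᵀ)) *
          C_pᵀ).trace /
        (fromCols E_R C_r *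
          (∫ t in Set.Ioi (0 : ℝ),
            NormedSpace.exp (t • A) * (B * Bᵀ) * NormedSpace.exp (t • Aᵀ)) *
          (fromCols E_R C_r)ᵀ).trace ≤
      8 * (M ^ 2 * ‖A‖ * ‖B‖ ^ 2 / (σ ^ 2 * α)) *
        (C_pᵀ * C_p).trace / ((E_Rᵀ * E_R).trace + (C_rᵀ * C_r).trace) :=
  stmt_16_general A hA B M α hα hdecay σ hσ hB C_p E_R C_r hnz
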